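/- Let B be the collection of bases of a Lagrangian orthogonal matroid on [n] ∪ [n]* satisfying the Strong Exchange Property, and fix i ∈ [n]. Define B_1 = {B \ {i} : i ∈ B, B ∈ 𝔅} and B_2 = {B \ {i*} : i* ∈ B, B ∈ 𝔅}. If both B_1 and B_2 are nonempty, then each of B_1 and B_2 satisfies the Strong Exchange Property on ([n] ∪ [n]*) \ {i, i*}. -/

import Mathlib

/-- `J n` models `[n] ∪ [n]*` : the element `(i, false)` is `i` and `(i, true)` is `i*`. -/
abbrev J (n : ℕ) := Fin n × Bool

/-- The star involution `i ↦ i*`, `i* ↦ i`. -/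
def jstar {n : ℕ} (x : J n) : J n := (x.1, !x.2)

/-- `K* = { k* : k ∈ K }`. -/
def starSet {n : ℕ} (K : Finset (J n)) : Finset (J n) := K.image jstar

/-- A subset `K ⊆ [n] ∪ [n]*` is admissible if `K ∩ K* = ∅`. -/
def Admissible {n : ℕ} (K : Finset (J n)) : Prop := K ∩ starSet K = ∅

/-- The Strong Exchange Property for a collection of subsets of `[n] ∪ [n]*`. -/
def StrongExchange {n : ℕ} (𝔅 : Set (Finset (J n))) : Prop :=
  ∀ A ∈ 𝔅, ∀ C ∈ 𝔅, ∀ a ∈ symmDiff A C, ∃ b ∈ C \ A, b ≠ jstar a ∧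
    symmDiff A {a, b, jstar a, jstar b} ∈ 𝔅 ∧ symmDiff C {a, b, jstar a, jstar b} ∈ 𝔅

/-!
A basis `B ∋ e` is admissible, so no element of `B` is `e*`. Hence for two bases `A, C ∋ e` and
`a ∈ A △ C`, none of the elements `a, b, a*, b*` of an exchange in `𝔅` equals `e`: both exchanged
bases still contain `e`, and erasing `e` commutes with the exchange.
-/

namespace Finset

variable {α : Type*} [DecidableEq α]

theorem erase_symmDiff_erase (A C : Finset α) (e : α) :
    symmDiff (A.erase e) (C.erase e) = (symmDiff A C).erase e := by
  ext x
  by_cases hx : x = e <;> simp [mem_symmDiff, hx]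

theorem symmDiff_erase_of_notMem {e : α} {S : Finset α} (he : e ∉ S) (X : Finset α) :
    symmDiff (X.erase e) S = (symmDiff X S).erase e := by
  ext x
  by_cases hx : x = e
  · subst hx
    simp [mem_symmDiff, he]
  · simp [mem_symmDiff, hx]

end Finset

open Finset

section

variable {n : ℕ}

@[simp]
theorem jstar_jstar (x : J n) : jstar (jstar x) = x := by
  simp [jstar]

theorem Admissible.jstar_ne_of_mem {K : Finset (J n)} (hK : Admissible K) {e x : J n}
    (he : e ∈ K) (hx : x ∈ K) : jstar x ≠ e := by
  rintro rfl
  have hmem : x ∈ K ∩ starSet K := mem_inter.mpr ⟨hx, mem_image.mpr ⟨jstar x, he, jstar_jstar x⟩⟩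
  rw [hK] at hmem
  exact notMem_empty x hmem

def contraction (𝔅 : Set (Finset (J n))) (e : J n) : Set (Finset (J n)) :=
  {A | ∃ B ∈ 𝔅, e ∈ B ∧ A = B.erase e}

theorem StrongExchange.contraction {𝔅 : Set (Finset (J n))} (hSE : StrongExchange 𝔅)
    (hadm : ∀ B ∈ 𝔅, Admissible B) (e : J n) : StrongExchange (contraction 𝔅 e) := by
  rintro _ ⟨A, hA, heA, rfl⟩ _ ⟨C, hC, heC, rfl⟩ a ha
  obtain ⟨hae, haAC⟩ := mem_erase.mp (erase_symmDiff_erase A C e ▸ ha)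
  obtain ⟨b, hb, hba, hAS, hCS⟩ := hSE A hA C hC a haAC
  obtain ⟨hbC, hbA⟩ := mem_sdiff.mp hb
  have hbe : b ≠ e := fun h => hbA (h ▸ heA)
  have hastar : jstar a ≠ e := by
    rcases mem_symmDiff.mp haAC with ⟨haA, -⟩ | ⟨haC, -⟩
    · exact (hadm A hA).jstar_ne_of_mem heA haA
    · exact (hadm C hC).jstar_ne_of_mem heC haC
  have hbstar : jstar b ≠ e := (hadm C hC).jstar_ne_of_mem heC hbC
  have heS : e ∉ ({a, b, jstar a, jstar b} : Finset (J n)) := by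
    simp only [mem_insert, mem_singleton, not_or]
    exact ⟨hae.symm, hbe.symm, hastar.symm, hbstar.symm⟩
  refine ⟨b, by simp [hbe, hbC, hbA], hba, ?_, ?_⟩
  · exact ⟨_, hAS, mem_symmDiff.mpr (Or.inl ⟨heA, heS⟩), symmDiff_erase_of_notMem heS A⟩
  · exact ⟨_, hCS, mem_symmDiff.mpr (Or.inl ⟨heC, heS⟩), symmDiff_erase_of_notMem heS C⟩

end

theorem contraction_strong_exchange_general (n : ℕ) (𝔅 : Set (Finset (J n)))
    (hadm : ∀ B ∈ 𝔅, Admissible B ∧ B.card = n)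
    (hSE : StrongExchange 𝔅) (i : Fin n)
    (𝔅₁ 𝔅₂ : Set (Finset (J n)))
    (h₁ : 𝔅₁ = {A | ∃ B ∈ 𝔅, (i, false) ∈ B ∧ A = B.erase (i, false)})
    (h₂ : 𝔅₂ = {A | ∃ B ∈ 𝔅, (i, true) ∈ B ∧ A = B.erase (i, true)}) :
    StrongExchange 𝔅₁ ∧ StrongExchange 𝔅₂ := by
  have hadm' : ∀ B ∈ 𝔅, Admissible B := fun B hB => (hadm B hB).1
  subst h₁ h₂
  exact ⟨hSE.contraction hadm' (i, false), hSE.contraction hadm' (i, true)⟩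

/-- deleting `i` (resp. `i*`) from the bases containing it yields two
collections `𝔅₁`, `𝔅₂`; if both are nonempty, each satisfies the Strong Exchange
Property (on `([n] ∪ [n]*) \ {i, i*}`). -/
theorem contraction_strong_exchange (n : ℕ) (𝔅 : Set (Finset (J n)))
    (hadm : ∀ B ∈ 𝔅, Admissible B ∧ B.card = n)
    (hSE : StrongExchange 𝔅) (i : Fin n)
    (𝔅₁ 𝔅₂ : Set (Finset (J n)))
    (h₁ : 𝔅₁ = {A | ∃ B ∈ 𝔅, (i, false) ∈ B ∧ A = B.erase (i, false)})
    (h₂ : 𝔅₂ = {A | ∃ B ∈ 𝔅, (i, true) ∈ B ∧ A = B.erase (i, true)})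
    (hne₁ : 𝔅₁.Nonempty) (hne₂ : 𝔅₂.Nonempty) :
    StrongExchange 𝔅₁ ∧ StrongExchange 𝔅₂ :=
  contraction_strong_exchange_general n 𝔅 hadm hSE i 𝔅₁ 𝔅₂ h₁ h₂
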